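/- Kőnig's duality applied to the crossing graph: in the two-leaf update setting, the maximum number of horizontal edges that can be safely updated equals |H| minus the maximum matching of the bipartite crossing graph G'. -/

import Mathlib

/-!
A `C₁ → C₂` edge `a → b` and a `C₂ → C₁` edge `c → d` close a cycle with the chains as soon as
`b ≤ c` and `d ≤ a`. Conversely, a set of horizontal edges without such an interlaced pair is
acyclic, since the two chains can be merged into one linear order respecting it. Hence the safe
sets are the independent sets of the bipartite crossing graph, and the theorem is Kőnig's
theorem: a matching and an independent set always have at most `|H|` elements together, and a
set `A₀` of maximal deficiency `|A₀| - |N(A₀)|` gives, via Hall's theorem, a matching and an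
independent set with at least `|H|` elements together.
-/

/-- A directed simple cycle in the digraph given by relation `r`. -/
def IsCycle {V : Type*} (r : V → V → Prop) (l : List V) : Prop :=
  l ≠ [] ∧ l.Nodup ∧
    ∀ i : Fin l.length, r (l.get i) (l.get ⟨((i : ℕ) + 1) % l.length, Nat.mod_lt _ i.pos⟩)

/-- Chain-successor edges of two disjoint chains `C₁ = Fin m` and `C₂ = Fin k`. -/
def chainEdge {m k : ℕ} : Fin m ⊕ Fin k → Fin m ⊕ Fin k → Prop
  | Sum.inl i, Sum.inl j => (i : ℕ) + 1 = (j : ℕ)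
  | Sum.inr i, Sum.inr j => (i : ℕ) + 1 = (j : ℕ)
  | _, _ => False

/-- Two horizontal edges cross if the chain edges plus the two of them contain a
directed cycle. -/
def Crosses {m k : ℕ} (h₁ h₂ : (Fin m ⊕ Fin k) × (Fin m ⊕ Fin k)) : Prop :=
  ∃ l, IsCycle (fun a b => chainEdge a b ∨ (a, b) = h₁ ∨ (a, b) = h₂) l

/-- A set `S` of horizontal edges is safely updatable if the chain-successor
edges together with `S` form an acyclic digraph. -/
def Safe {m k : ℕ} (S : Finset ((Fin m ⊕ Fin k) × (Fin m ⊕ Fin k))) : Prop :=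
  ∀ l, ¬ IsCycle (fun a b => chainEdge a b ∨ (a, b) ∈ S) l

/-- A matching in the (bipartite) crossing graph on the horizontal edge set `H`:
a finite set of crossing pairs of edges of `H`, no two pairs sharing an
endpoint. -/
def IsCrossingMatching {m k : ℕ} (H : Finset ((Fin m ⊕ Fin k) × (Fin m ⊕ Fin k)))
    (M : Finset (((Fin m ⊕ Fin k) × (Fin m ⊕ Fin k)) ×
                 ((Fin m ⊕ Fin k) × (Fin m ⊕ Fin k)))) : Prop :=
  (∀ p ∈ M, p.1 ∈ H ∧ p.2 ∈ H ∧ p.1 ≠ p.2 ∧ Crosses p.1 p.2) ∧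
  (∀ p ∈ M, ∀ q ∈ M, p ≠ q →
    p.1 ≠ q.1 ∧ p.1 ≠ q.2 ∧ p.2 ≠ q.1 ∧ p.2 ≠ q.2)

open Finset

namespace Finset

variable {α β : Type*}

theorem exists_matching_of_card_le_biUnion_card_add [DecidableEq β] (A : Finset α)
    (t : α → Finset β) (d : ℕ) (h : ∀ u ⊆ A, #u ≤ #(u.biUnion t) + d) :
    ∃ M : Finset (α × β), (∀ p ∈ M, p.1 ∈ A ∧ p.2 ∈ t p.1) ∧
      Set.InjOn Prod.fst (M : Set (α × β)) ∧ Set.InjOn Prod.snd (M : Set (α × β)) ∧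
      #A ≤ #M + d := by
  classical
  -- Hall's theorem after adding `d` new vertices adjacent to everything.
  let t' : A → Finset (β ⊕ Fin d) := fun a => (t a).disjSum univ
  have hall : ∀ u : Finset A, #u ≤ #(u.biUnion t') := by
    intro u
    obtain rfl | ⟨a₀, ha₀⟩ := u.eq_empty_or_nonempty
    · simp
    have hsub : ((u.map (Function.Embedding.subtype _)).biUnion t).disjSum univ ⊆
        u.biUnion t' := by
      rintro (b | j) hb
      · simp only [inl_mem_disjSum, mem_biUnion, mem_map] at hb
        obtain ⟨_, ⟨a, ha, rfl⟩, hb⟩ := hb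
        exact mem_biUnion.2 ⟨a, ha, inl_mem_disjSum.2 hb⟩
      · exact mem_biUnion.2 ⟨a₀, ha₀, inr_mem_disjSum.2 (mem_univ j)⟩
    calc #u = #(u.map (Function.Embedding.subtype _)) := (card_map _).symm
      _ ≤ #((u.map (Function.Embedding.subtype _)).biUnion t) + d :=
          h _ fun _ hx => by obtain ⟨a, -, rfl⟩ := mem_map.1 hx; exact a.2
      _ = #(((u.map (Function.Embedding.subtype _)).biUnion t).disjSum univ) := by
          simp [card_disjSum]
      _ ≤ #(u.biUnion t') := card_le_card hsub
  obtain ⟨f, hf, hft⟩ := (all_card_le_biUnion_card_iff_exists_injective t').1 hall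
  set M := (A ×ˢ A.biUnion t).filter fun p => ∃ h : p.1 ∈ A, f ⟨p.1, h⟩ = Sum.inl p.2
  have hM : ∀ p, p ∈ M ↔ ∃ h : p.1 ∈ A, f ⟨p.1, h⟩ = Sum.inl p.2 := by
    refine fun p => ⟨fun hp => (mem_filter.1 hp).2, fun ⟨ha, hp⟩ => mem_filter.2 ⟨?_, ha, hp⟩⟩
    have hb : p.2 ∈ t p.1 := by simpa [t', hp] using hft ⟨p.1, ha⟩
    exact mem_product.2 ⟨ha, mem_biUnion.2 ⟨p.1, ha, hb⟩⟩
  refine ⟨M, fun p hp => ?_, fun p hp q hq hpq => ?_, fun p hp q hq hpq => ?_, ?_⟩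
  · obtain ⟨ha, hp⟩ := (hM p).1 hp
    exact ⟨ha, by simpa [t', hp] using hft ⟨p.1, ha⟩⟩
  · obtain ⟨ha, hp⟩ := (hM p).1 hp
    obtain ⟨hb, hq⟩ := (hM q).1 hq
    simp only [hpq, hq, Sum.inl.injEq] at hp
    exact Prod.ext hpq hp.symm
  · obtain ⟨ha, hp⟩ := (hM p).1 hp
    obtain ⟨hb, hq⟩ := (hM q).1 hq
    have := @hf ⟨p.1, ha⟩ ⟨q.1, hb⟩ (by rw [hp, hq, hpq])
    exact Prod.ext (congrArg Subtype.val this) hpq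
  · have hsub : A.attach.image f ⊆ (M.image Prod.snd).disjSum univ := by
      simp only [subset_iff, mem_image, mem_attach, true_and, forall_exists_index,
        forall_apply_eq_imp_iff]
      intro a
      rcases hfa : f a with b | j
      · exact inl_mem_disjSum.2 (mem_image.2 ⟨(a, b), (hM _).2 ⟨a.2, hfa⟩, rfl⟩)
      · exact inr_mem_disjSum.2 (mem_univ j)
    calc #A = #(A.attach.image f) := by rw [card_image_of_injective _ hf, card_attach]
      _ ≤ #(M.image Prod.snd) + d := by simpa [card_disjSum] using card_le_card hsub
      _ ≤ #M + d := by gcongr; exact card_image_le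

theorem exists_matching_and_independent (r : α → β → Prop) (A : Finset α) (B : Finset β) :
    ∃ M ⊆ A ×ˢ B, (∀ p ∈ M, r p.1 p.2) ∧
      Set.InjOn Prod.fst (M : Set (α × β)) ∧ Set.InjOn Prod.snd (M : Set (α × β)) ∧
      ∃ A' ⊆ A, ∃ B' ⊆ B, (∀ a ∈ A', ∀ b ∈ B', ¬ r a b) ∧ #A + #B ≤ #M + #A' + #B' := by
  classical
  let t : α → Finset β := fun a => B.filter (r a)
  -- `A₀` maximises the deficiency `|u| - |N(u)|`, where `N(u) = u.biUnion t`;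
  -- the independent set is `A₀ ∪ (B \ N(A₀))`.
  obtain ⟨A₀, hA₀, hmax⟩ := A.powerset.exists_max_image
    (fun u => (#u : ℤ) - #(u.biUnion t)) ⟨∅, empty_mem_powerset A⟩
  rw [mem_powerset] at hA₀
  have hdef : ∀ u ⊆ A, (#u : ℤ) - #(u.biUnion t) ≤ #A₀ - #(A₀.biUnion t) :=
    fun u hu => hmax u (mem_powerset.2 hu)
  have hdef₀ : #(A₀.biUnion t) ≤ #A₀ := by
    have := hdef ∅ (empty_subset _); simp only [card_empty, biUnion_empty] at this; omega
  have hNB : A₀.biUnion t ⊆ B := biUnion_subset.2 fun _ _ => filter_subset _ _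
  obtain ⟨M, hMt, hM₁, hM₂, hMcard⟩ := exists_matching_of_card_le_biUnion_card_add A t
    (#A₀ - #(A₀.biUnion t)) fun u hu => by have := hdef u hu; omega
  refine ⟨M, fun p hp => ?_, fun p hp => ?_, hM₁, hM₂, A₀, hA₀, B \ A₀.biUnion t, sdiff_subset,
    fun a ha b hb hab => ?_, ?_⟩
  · obtain ⟨ha, hb⟩ := hMt p hp
    exact mem_product.2 ⟨ha, (mem_filter.1 hb).1⟩
  · exact (mem_filter.1 (hMt p hp).2).2
  · exact (mem_sdiff.1 hb).2 (mem_biUnion.2 ⟨a, ha, mem_filter.2 ⟨(mem_sdiff.1 hb).1, hab⟩⟩)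
  · have := card_le_card hNB
    rw [card_sdiff_of_subset hNB]
    omega

theorem card_add_card_le_of_independent_of_matching (r : α → α → Prop)
    {H S : Finset α} {M : Finset (α × α)} (hSH : S ⊆ H) (hS : ∀ x ∈ S, ∀ y ∈ S, ¬ r x y)
    (hM : ∀ p ∈ M, p.1 ∈ H ∧ p.2 ∈ H ∧ r p.1 p.2)
    (hdisj : ∀ p ∈ M, ∀ q ∈ M, p ≠ q → p.1 ≠ q.1 ∧ p.1 ≠ q.2 ∧ p.2 ≠ q.1 ∧ p.2 ≠ q.2) :
    #S + #M ≤ #H := by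
  classical
  -- every matched pair has an end outside `S`
  have hmaps : ∀ p ∈ M, (if p.1 ∈ S then p.2 else p.1) ∈ H \ S := by
    intro p hp
    obtain ⟨h₁, h₂, hr⟩ := hM p hp
    split_ifs with h
    · exact mem_sdiff.2 ⟨h₂, fun h' => hS _ h _ h' hr⟩
    · exact mem_sdiff.2 ⟨h₁, h⟩
  have hinj : Set.InjOn (fun p : α × α => if p.1 ∈ S then p.2 else p.1) M := by
    intro p hp q hq hpq
    by_contra hne
    have := hdisj p hp q hq hne
    simp only at hpq
    split_ifs at hpq <;> tauto
  have := card_le_card_of_injOn _ hmaps hinj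
  rw [card_sdiff_of_subset hSH] at this
  have := card_le_card hSH
  omega

end Finset

section Cycles

variable {V : Type*} {r : V → V → Prop}

theorem IsCycle.mono {r' : V → V → Prop} (h : ∀ a b, r a b → r' a b) {l : List V}
    (hl : IsCycle r l) : IsCycle r' l :=
  ⟨hl.1, hl.2.1, fun i => h _ _ (hl.2.2 i)⟩

theorem not_isCycle_of_forall_lt {β : Type*} [LinearOrder β] (φ : V → β)
    (hφ : ∀ a b, r a b → φ a < φ b) (l : List V) : ¬ IsCycle r l := by
  rintro ⟨hne, -, hstep⟩
  have : Nonempty (Fin l.length) := ⟨⟨0, List.length_pos_iff.2 hne⟩⟩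
  obtain ⟨i, hi⟩ := Finite.exists_max fun i => φ (l.get i)
  exact (hi _).not_gt (hφ _ _ (hstep i))

theorem isCycle_ofFn {n : ℕ} {f : Fin (n + 1) → V} (hf : Function.Injective f)
    (hstep : ∀ i : Fin n, r (f i.castSucc) (f i.succ)) (hlast : r (f (Fin.last n)) (f 0)) :
    IsCycle r (List.ofFn f) := by
  refine ⟨by simp, List.nodup_ofFn.2 hf, fun i => ?_⟩
  obtain ⟨i, hi⟩ := i
  simp only [List.length_ofFn] at hi
  simp only [List.get_eq_getElem, List.getElem_ofFn, List.length_ofFn]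
  rcases Nat.lt_succ_iff_lt_or_eq.1 hi with hi | rfl
  · simpa [Nat.mod_eq_of_lt (Nat.succ_lt_succ hi)] using hstep ⟨i, hi⟩
  · simpa [Fin.last] using hlast

end Cycles

abbrev Edge (m k : ℕ) : Type := (Fin m ⊕ Fin k) × (Fin m ⊕ Fin k)

section TwoChains

variable {m k : ℕ}

def Interlaced (e f : Edge m k) : Prop :=
  ∃ a b c d, e = (Sum.inl a, Sum.inr b) ∧ f = (Sum.inr c, Sum.inl d) ∧ b ≤ c ∧ d ≤ a

def IsHorizontal (e : Edge m k) : Prop :=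
  (e.1.isLeft = true ∧ e.2.isRight = true) ∨ (e.1.isRight = true ∧ e.2.isLeft = true)

theorem Interlaced.crosses {e f : Edge m k} (h : Interlaced e f) : Crosses e f := by
  obtain ⟨a, b, c, d, rfl, rfl, hbc, hda⟩ := h
  rw [Fin.le_iff_val_le_val] at hbc hda
  -- the cycle `d → ⋯ → a` on `C₁`, then `b → ⋯ → c` on `C₂`
  let v : Fin ((a - d) + (c - b) + 1 + 1) → Fin m ⊕ Fin k := fun t =>
    if ht : (t : ℕ) ≤ a - d then Sum.inl ⟨d + t, by omega⟩
    else Sum.inr ⟨b + (t - (a - d) - 1), by omega⟩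
  refine ⟨List.ofFn v, isCycle_ofFn ?_ (fun i => ?_) ?_⟩
  · intro s t hst
    simp only [v] at hst
    split_ifs at hst <;> simp only [Sum.inl.injEq, Sum.inr.injEq, Fin.ext_iff] at hst <;> omega
  · simp only [v, Fin.val_castSucc, Fin.val_succ]
    split_ifs with h₁ h₂ h₂
    · exact Or.inl (show (d : ℕ) + i + 1 = d + (i + 1) by omega)
    · refine Or.inr (Or.inl ?_)
      simp only [Prod.mk.injEq, Sum.inl.injEq, Sum.inr.injEq, Fin.ext_iff]
      omega
    · omega
    · exact Or.inl (show (b : ℕ) + (i - (a - d) - 1) + 1 = b + (i + 1 - (a - d) - 1) by omega)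
  · simp only [v, Fin.val_last, Fin.val_zero, Nat.zero_le, dite_true, add_zero]
    rw [dif_neg (by omega)]
    refine Or.inr (Or.inr ?_)
    simp only [Prod.mk.injEq, Sum.inr.injEq, Fin.ext_iff, and_true]
    omega

theorem Safe.not_crosses {S : Finset (Edge m k)} (hS : Safe S)
    {e f : Edge m k} (he : e ∈ S) (hf : f ∈ S) : ¬ Crosses e f :=
  fun ⟨l, hl⟩ => hS l (hl.mono fun _ _ => Or.imp_right (Or.rec (· ▸ he) (· ▸ hf)))

section SafeOrder

variable (S : Finset (Edge m k))

def leftDemand (j : ℕ) : ℕ :=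
  S.sup fun
    | (Sum.inl a, Sum.inr b) => if (b : ℕ) ≤ j then a + 1 else 0
    | _ => 0

theorem leftDemand_mono : Monotone (leftDemand S) := by
  intro j j' hjj
  refine Finset.sup_mono_fun fun e _ => ?_
  rcases e with ⟨a | a, b | b⟩ <;> try exact le_rfl
  dsimp only
  split_ifs <;> omega

variable {S}

theorem le_leftDemand {a : Fin m} {b : Fin k} (h : (Sum.inl a, Sum.inr b) ∈ S) :
    (a : ℕ) + 1 ≤ leftDemand S b :=
  Finset.le_sup_of_le h (by simp)

theorem leftDemand_le {j d : ℕ}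
    (h : ∀ (a : Fin m) (b : Fin k), (Sum.inl a, Sum.inr b) ∈ S → (b : ℕ) ≤ j → (a : ℕ) < d) :
    leftDemand S j ≤ d := by
  refine Finset.sup_le fun e he => ?_
  rcases e with ⟨a | a, b | b⟩ <;> try exact Nat.zero_le _
  dsimp only
  split_ifs with hb
  · exact h a b he hb
  · exact Nat.zero_le _

/-- A linear order merging the two chains: vertex `j` of `C₂` comes right after the vertices of
`C₁` that an edge `a → b` of `S` with `b ≤ j` forces before it, namely those up to `a`. -/
def mergeRank (S : Finset (Edge m k)) : Fin m ⊕ Fin k → ℕ ×ₗ ℕ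
  | .inl i => toLex ((i : ℕ) + 1, 0)
  | .inr j => toLex (leftDemand S j, (j : ℕ) + 1)

theorem safe_of_forall_not_interlaced (hS : ∀ e ∈ S, IsHorizontal e)
    (hind : ∀ e ∈ S, ∀ f ∈ S, ¬ Interlaced e f) : Safe S := by
  refine not_isCycle_of_forall_lt (mergeRank S) ?_
  rintro x y (hxy | hxy)
  · rcases x with i | i <;> rcases y with j | j <;> simp only [chainEdge] at hxy
    · simp only [mergeRank, Prod.Lex.toLex_lt_toLex]; omega
    · have := leftDemand_mono S (show (i : ℕ) ≤ j by omega)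
      simp only [mergeRank, Prod.Lex.toLex_lt_toLex]; omega
  · rcases x with i | i <;> rcases y with j | j
    · simpa [IsHorizontal] using hS _ hxy
    · have := le_leftDemand hxy
      simp only [mergeRank, Prod.Lex.toLex_lt_toLex]; omega
    · have : leftDemand S i ≤ j := leftDemand_le fun a b hab hbi =>
        Nat.lt_of_not_le fun hja => hind _ hab _ hxy ⟨a, b, i, j, rfl, rfl, hbi, hja⟩
      simp only [mergeRank, Prod.Lex.toLex_lt_toLex]; omega
    · simpa [IsHorizontal] using hS _ hxy

end SafeOrder

theorem safe_union_of_forall_not_interlaced {A B : Finset (Edge m k)}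
    (hA : ∀ e ∈ A, IsHorizontal e ∧ e.1.isLeft = true)
    (hB : ∀ e ∈ B, IsHorizontal e ∧ e.1.isLeft = false)
    (hind : ∀ e ∈ A, ∀ f ∈ B, ¬ Interlaced e f) : Safe (A ∪ B) := by
  refine safe_of_forall_not_interlaced
    (fun e he => (mem_union.1 he).elim (hA e · |>.1) (hB e · |>.1)) fun e he f hf hef => ?_
  obtain ⟨a, b, c, d, rfl, rfl, hbc, hda⟩ := hef
  have heA : (Sum.inl a, Sum.inr b) ∈ A :=
    (mem_union.1 he).resolve_right fun h => by simpa using (hB _ h).2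
  have hfB : (Sum.inr c, Sum.inl d) ∈ B :=
    (mem_union.1 hf).resolve_left fun h => by simpa using (hA _ h).2
  exact hind _ heA _ hfB ⟨a, b, c, d, rfl, rfl, hbc, hda⟩

theorem isCrossingMatching_of_interlaced {H A B : Finset (Edge m k)}
    {M : Finset (Edge m k × Edge m k)} (hA : A ⊆ H) (hB : B ⊆ H) (hAB : Disjoint A B)
    (hMAB : M ⊆ A ×ˢ B) (hM : ∀ p ∈ M, Interlaced p.1 p.2)
    (h₁ : Set.InjOn Prod.fst (M : Set (Edge m k × Edge m k)))
    (h₂ : Set.InjOn Prod.snd (M : Set (Edge m k × Edge m k))) : IsCrossingMatching H M := by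
  have hmem : ∀ p ∈ M, p.1 ∈ A ∧ p.2 ∈ B := fun p hp => mem_product.1 (hMAB hp)
  have hne : ∀ p ∈ M, ∀ q ∈ M, p.1 ≠ q.2 := fun p hp q hq h =>
    disjoint_left.1 hAB (hmem p hp).1 (h ▸ (hmem q hq).2)
  refine ⟨fun p hp => ⟨hA (hmem p hp).1, hB (hmem p hp).2, hne p hp p hp, (hM p hp).crosses⟩,
    fun p hp q hq hpq => ⟨fun h => hpq (h₁ hp hq h), hne p hp q hq,
      fun h => hne q hq p hp h.symm, fun h => hpq (h₂ hp hq h)⟩⟩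

theorem card_add_card_le_of_safe_of_isCrossingMatching {H S : Finset (Edge m k)}
    {M : Finset (Edge m k × Edge m k)} (hSH : S ⊆ H) (hS : Safe S)
    (hM : IsCrossingMatching H M) : #S + #M ≤ #H :=
  card_add_card_le_of_independent_of_matching Crosses hSH (fun _ he _ hf => hS.not_crosses he hf)
    (fun p hp => ⟨(hM.1 p hp).1, (hM.1 p hp).2.1, (hM.1 p hp).2.2.2⟩) hM.2

theorem exists_safe_and_isCrossingMatching {H : Finset (Edge m k)}
    (hH : ∀ e ∈ H, IsHorizontal e) :
    ∃ S ⊆ H, Safe S ∧ ∃ M, IsCrossingMatching H M ∧ #H ≤ #S + #M := by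
  have hsplit : #(H.filter (·.1.isLeft)) + #(H.filter fun e => ¬ e.1.isLeft) = #H :=
    card_filter_add_card_filter_not _
  have hdisj := disjoint_filter_filter_not H H fun e => e.1.isLeft
  obtain ⟨M, hMAB, hMr, hM₁, hM₂, A, hA, B, hB, hind, hcard⟩ :=
    exists_matching_and_independent Interlaced (H.filter (·.1.isLeft))
      (H.filter fun e => ¬ e.1.isLeft)
  have hsafe : Safe (A ∪ B) := safe_union_of_forall_not_interlaced
    (fun e he => by have := mem_filter.1 (hA he); exact ⟨hH e this.1, this.2⟩)
    (fun e he => by have := mem_filter.1 (hB he); exact ⟨hH e this.1, by simpa using this.2⟩)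
    hind
  refine ⟨A ∪ B, union_subset (hA.trans (filter_subset _ _)) (hB.trans (filter_subset _ _)),
    hsafe, M, isCrossingMatching_of_interlaced (filter_subset _ _) (filter_subset _ _) hdisj
      hMAB hMr hM₁ hM₂, ?_⟩
  rw [card_union_of_disjoint (hdisj.mono hA hB)]
  linarith

end TwoChains

/-- Kőnig's duality applied to the crossing graph: in the
two-leaf update setting, the maximum number of horizontal edges of `H` that can
be safely updated equals `|H|` minus the maximum size of a matching of the
bipartite crossing graph. -/
theorem max_safe_eq_card_sub_max_matching (m k : ℕ)
    (H : Finset ((Fin m ⊕ Fin k) × (Fin m ⊕ Fin k)))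
    (hH : ∀ e ∈ H, (e.1.isLeft = true ∧ e.2.isRight = true) ∨
                   (e.1.isRight = true ∧ e.2.isLeft = true)) :
    sSup {n : ℕ | ∃ S ⊆ H, Safe S ∧ S.card = n} =
      H.card - sSup {n : ℕ | ∃ M, IsCrossingMatching H M ∧ M.card = n} := by
  have hsafe_bdd : BddAbove {n : ℕ | ∃ S ⊆ H, Safe S ∧ S.card = n} :=
    ⟨#H, by rintro _ ⟨S, hSH, -, rfl⟩; exact card_le_card hSH⟩
  have hmatch_bdd : BddAbove {n : ℕ | ∃ M, IsCrossingMatching H M ∧ M.card = n} :=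
    ⟨#(H ×ˢ H), by
      rintro _ ⟨M, hM, rfl⟩
      exact card_le_card fun p hp => mem_product.2 ⟨(hM.1 p hp).1, (hM.1 p hp).2.1⟩⟩
  obtain ⟨M₀, hM₀, hM₀card⟩ :=
    Nat.sSup_mem (s := {n : ℕ | ∃ M, IsCrossingMatching H M ∧ M.card = n})
      ⟨0, ∅, ⟨by simp, by simp⟩, rfl⟩ hmatch_bdd
  rw [← hM₀card]
  refine le_antisymm (csSup_le' ?_) ?_
  · rintro _ ⟨S, hSH, hS, rfl⟩
    have := card_add_card_le_of_safe_of_isCrossingMatching hSH hS hM₀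
    omega
  · obtain ⟨S, hSH, hS, M, hM, hcard⟩ := exists_safe_and_isCrossingMatching hH
    have := hM₀card ▸ le_csSup hmatch_bdd ⟨M, hM, rfl⟩
    have := le_csSup hsafe_bdd ⟨S, hSH, hS, rfl⟩
    omega
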